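/- arXiv:0712.3175 — 2 statements merged into one kernel-verified Lean document; each statement's English description precedes it below -/
import Mathlib

section
/- Let x ∈ G have order n, and let i, j, k be positive integers with gcd(i,n) = gcd(j,n) = 1 and ik ≡ 1 (mod n). Then u = (1 + x^j + ... + x^{j(i-1)})(1 + x^i + ... + x^{i(k-1)}) + ((1 - ik)/n)·x̂ is a unit of ZG, where x̂ = 1 + x + ... + x^{n-1}. -/
/-- The canonical involution on the group ring `K[G]`, sending `∑ a_g g` to `∑ a_g g⁻¹`. -/
noncomputable def gstar {K G : Type*} [CommRing K] [Group G] (x : MonoidAlgebra K G) :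
    MonoidAlgebra K G := MonoidAlgebra.ofCoeff (Finsupp.mapDomain (fun g => g⁻¹) x.coeff)

/-- `x̂ = 1 + x + ⋯ + x^(n-1)` in the integral group ring, where `n = orderOf x`. -/
noncomputable def hatZ {G : Type*} [Group G] (x : G) : MonoidAlgebra ℤ G :=
  ∑ i ∈ Finset.range (orderOf x), (MonoidAlgebra.of ℤ G x) ^ i

/-! The inverse is explicit. Choose `j'` with `j j' = 1 + n e` and write `c = -p`, so that
`i k = 1 + n p`. Then `u⁻¹ = (∑_{r<j'} x^{jir}) (∑_{r<j} x^r) - e x̂`. Everything is a polynomial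
in `x`, so the check takes place in the commutative group ring of `⟨x⟩`, using two facts:
`x^t x̂ = x̂`, and products of geometric sums telescope,
`(∑_{r<a} z^r)(∑_{s<b} z^{as}) = ∑_{r<ab} z^r`, so that `∑_{r<a+nq} x^r = ∑_{r<a} x^r + q x̂`. -/

open Finset
open scoped IsMulCommutative -- makes the group ring of `Subgroup.zpowers x` a `CommRing`

section GeomSum

variable {R : Type*}

theorem geom_sum_mul_geom_sum_pow [Semiring R] (x : R) (a b : ℕ) :
    (∑ i ∈ range a, x ^ i) * ∑ i ∈ range b, (x ^ a) ^ i = ∑ i ∈ range (a * b), x ^ i := by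
  induction b with
  | zero => simp
  | succ b ih =>
    have hcomm : Commute (∑ i ∈ range a, x ^ i) (x ^ (a * b)) :=
      .sum_left _ _ _ fun i _ => (Commute.refl x).pow_pow _ _
    rw [sum_range_succ, mul_add, ih, ← pow_mul, hcomm.eq, Nat.mul_succ, sum_range_add, mul_sum]
    simp only [pow_add]

variable [Ring R] {y : R} {n : ℕ}

theorem pow_mul_geom_sum_of_pow_eq_one (hy : y ^ n = 1) (t : ℕ) :
    y ^ t * ∑ i ∈ range n, y ^ i = ∑ i ∈ range n, y ^ i := by
  have hfix : y * ∑ i ∈ range n, y ^ i = ∑ i ∈ range n, y ^ i := by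
    rw [← sub_eq_zero, ← sub_one_mul, mul_geom_sum, hy, sub_self]
  induction t with
  | zero => rw [pow_zero, one_mul]
  | succ t ih => rw [pow_succ, mul_assoc, hfix, ih]

theorem geom_sum_pow_mul_geom_sum_of_pow_eq_one (hy : y ^ n = 1) (a m : ℕ) :
    (∑ i ∈ range m, (y ^ a) ^ i) * ∑ i ∈ range n, y ^ i = m * ∑ i ∈ range n, y ^ i := by
  simp only [sum_mul, ← pow_mul, pow_mul_geom_sum_of_pow_eq_one hy, sum_const, card_range,
    nsmul_eq_mul]

theorem geom_sum_add_mul_of_pow_eq_one (hy : y ^ n = 1) (a q : ℕ) :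
    ∑ i ∈ range (a + n * q), y ^ i = ∑ i ∈ range a, y ^ i + q * ∑ i ∈ range n, y ^ i := by
  have hfull : ∑ i ∈ range (n * q), y ^ i = q * ∑ i ∈ range n, y ^ i := by
    rw [← geom_sum_mul_geom_sum_pow, hy, one_geom_sum, Nat.cast_comm]
  simp only [sum_range_add, pow_add, ← mul_sum, hfull]
  rw [← mul_assoc, ← Nat.cast_comm, mul_assoc, pow_mul_geom_sum_of_pow_eq_one hy]

end GeomSum

section Hochsmann

variable {R : Type*} [CommRing R] {y : R} {n : ℕ}

theorem isUnit_geom_sum_mul_geom_sum_sub_of_pow_eq_one (hy : y ^ n = 1) {i j k j' p e : ℕ}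
    (hik : i * k = 1 + n * p) (hjj' : j * j' = 1 + n * e) :
    IsUnit ((∑ r ∈ range i, (y ^ j) ^ r) * (∑ r ∈ range k, (y ^ i) ^ r) -
      p * ∑ r ∈ range n, y ^ r) := by
  set σ := ∑ r ∈ range n, y ^ r
  set A := ∑ r ∈ range i, (y ^ j) ^ r
  set B := ∑ r ∈ range k, (y ^ i) ^ r
  set C := ∑ r ∈ range j', ((y ^ j) ^ i) ^ r
  set D := ∑ r ∈ range j, y ^ r
  have hA : A * σ = i * σ := geom_sum_pow_mul_geom_sum_of_pow_eq_one hy j i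
  have hB : B * σ = k * σ := geom_sum_pow_mul_geom_sum_of_pow_eq_one hy i k
  have hC : C * σ = j' * σ := by
    simpa only [pow_mul] using geom_sum_pow_mul_geom_sum_of_pow_eq_one hy (j * i) j'
  have hD : D * σ = j * σ := by simpa using geom_sum_pow_mul_geom_sum_of_pow_eq_one hy 1 j
  have hσ : σ * σ = n * σ := by simpa using geom_sum_pow_mul_geom_sum_of_pow_eq_one hy 1 n
  have hDAC : D * (A * C) = ∑ r ∈ range i, y ^ r + (i * e : ℕ) * σ := by
    have hexp : j * (i * j') = i + n * (i * e) := by rw [mul_left_comm, hjj']; ring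
    rw [geom_sum_mul_geom_sum_pow, geom_sum_mul_geom_sum_pow, hexp,
      geom_sum_add_mul_of_pow_eq_one hy]
  have hGB : (∑ r ∈ range i, y ^ r) * B = 1 + p * σ := by
    rw [geom_sum_mul_geom_sum_pow, hik, geom_sum_add_mul_of_pow_eq_one hy, geom_sum_one]
  have hjj'R : (j : R) * j' = 1 + n * e := mod_cast congrArg (Nat.cast : ℕ → R) hjj'
  refine IsUnit.of_mul_eq_one (C * D - e * σ) ?_
  push_cast at hDAC
  linear_combination B * hDAC + hGB + (i * e) * hB - e * A * hB - e * k * hA - p * C * hD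
    - p * j * hC + p * e * hσ - p * σ * hjj'R

end Hochsmann

theorem exists_mul_eq_one_add_mul_of_coprime {j n : ℕ} (hj : 0 < j) (hn : 0 < n)
    (h : j.Coprime n) : ∃ j' e, j * j' = 1 + n * e := by
  have hmod : j * j ^ (n.totient - 1) ≡ 1 [MOD n] := by
    rw [← pow_succ', Nat.sub_add_cancel (Nat.totient_pos.mpr hn)]
    exact Nat.ModEq.pow_totient h
  have hpos : 1 ≤ j * j ^ (n.totient - 1) := Nat.mul_pos hj (pow_pos hj _)
  obtain ⟨e, he⟩ := (Nat.modEq_iff_dvd' hpos).mp hmod.symm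
  exact ⟨j ^ (n.totient - 1), e, by omega⟩

theorem stmt_10_general {G : Type*} [Group G] (x : G) (n : ℕ) (hn : orderOf x = n) (hn0 : 0 < n)
    (i j k : ℕ) (hi : 0 < i) (hj : 0 < j) (hk : 0 < k)
    (hgj : Nat.gcd j n = 1)
    (c : ℤ) (hc : 1 - (i * k : ℤ) = n * c) :
    IsUnit ((∑ r ∈ Finset.range i, MonoidAlgebra.of ℤ G x ^ (j * r)) *
        (∑ r ∈ Finset.range k, MonoidAlgebra.of ℤ G x ^ (i * r)) +
      c • hatZ x) := by
  obtain ⟨p, rfl⟩ : ∃ p : ℕ, c = -p := Int.exists_eq_neg_ofNat (by nlinarith)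
  have hik : i * k = 1 + n * p := by zify; linarith
  obtain ⟨j', e, hjj'⟩ := exists_mul_eq_one_add_mul_of_coprime hj hn0 hgj
  let y := MonoidAlgebra.of ℤ (Subgroup.zpowers x) ⟨x, Subgroup.mem_zpowers x⟩
  have hy : y ^ n = 1 := by
    rw [← map_pow, ← map_one (MonoidAlgebra.of ℤ _)]
    congr 1
    ext
    simp [← hn, pow_orderOf_eq_one]
  let φ := MonoidAlgebra.mapDomainRingHom ℤ (Subgroup.zpowers x).subtype
  have hφy : φ y = MonoidAlgebra.of ℤ G x := by simp [φ, y]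
  have hunit := (isUnit_geom_sum_mul_geom_sum_sub_of_pow_eq_one hy hik hjj').map φ
  simp only [map_sub, map_mul, map_sum, map_pow, map_natCast, hφy] at hunit
  rw [hatZ, hn]
  simpa [pow_mul, sub_eq_add_neg] using hunit

/-- The Hochsmann unit: for x of order n and i, j, k with gcd(i,n) = gcd(j,n) = 1 and
ik ≡ 1 (mod n), say 1 - ik = n·c, the element
(1 + x^j + ⋯ + x^(j(i-1)))(1 + x^i + ⋯ + x^(i(k-1))) + c·x̂ is a unit of ℤG. -/
theorem stmt_10 {G : Type*} [Group G] (x : G) (n : ℕ) (hn : orderOf x = n) (hn0 : 0 < n)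
    (i j k : ℕ) (hi : 0 < i) (hj : 0 < j) (hk : 0 < k)
    (hgi : Nat.gcd i n = 1) (hgj : Nat.gcd j n = 1)
    (c : ℤ) (hc : 1 - (i * k : ℤ) = n * c) :
    IsUnit ((∑ r ∈ Finset.range i, MonoidAlgebra.of ℤ G x ^ (j * r)) *
        (∑ r ∈ Finset.range k, MonoidAlgebra.of ℤ G x ^ (i * r)) +
      c • hatZ x) :=
  stmt_10_general x n hn hn0 i j k hi hj hk hgj c hc
end

section
/- Let G be a group such that S_*(ZG) is a subgroup of U(ZG). Then every finite cyclic subgroup of G is normal in G. -/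
open MonoidAlgebra Finset

instance MonoidAlgebra.instIsAddTorsionFree {R M : Type*} [Semiring R] [IsAddTorsionFree R] :
    IsAddTorsionFree (MonoidAlgebra R M) :=
  coeff_injective.isAddTorsionFree (coeffAddEquiv : MonoidAlgebra R M ≃+ (M →₀ R)).toAddMonoidHom

section Involution

variable {K G : Type*} [CommRing K] [Group G]

lemma coeff_gstar (a : MonoidAlgebra K G) (g : G) : (gstar a).coeff g = a.coeff g⁻¹ := by
  rw [gstar, coeff_ofCoeff, ← Finsupp.mapDomain_apply inv_injective a.coeff g⁻¹, inv_inv]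

lemma gstar_add (a b : MonoidAlgebra K G) : gstar (a + b) = gstar a + gstar b := by
  ext g; simp [coeff_gstar]

lemma gstar_sub (a b : MonoidAlgebra K G) : gstar (a - b) = gstar a - gstar b := by
  ext g; simp [coeff_gstar]

lemma gstar_gstar (a : MonoidAlgebra K G) : gstar (gstar a) = a := by
  ext g; simp [coeff_gstar]

lemma gstar_zero : gstar (0 : MonoidAlgebra K G) = 0 := by
  ext g; simp [coeff_gstar]

lemma gstar_single (g : G) (r : K) : gstar (single g r) = single g⁻¹ r :=
  congrArg ofCoeff Finsupp.mapDomain_single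

lemma gstar_of (g : G) : gstar (of K G g) = of K G g⁻¹ := by
  simp only [of_apply, gstar_single]

lemma gstar_one : gstar (1 : MonoidAlgebra K G) = 1 := by
  rw [one_def, gstar_single, inv_one]

lemma gstar_mul (a b : MonoidAlgebra K G) : gstar (a * b) = gstar b * gstar a := by
  induction a using induction_linear with
  | zero => rw [zero_mul, gstar_zero, mul_zero]
  | add a a' ha ha' => rw [add_mul, gstar_add, ha, ha', gstar_add, mul_add]
  | single g r =>
    induction b using induction_linear with
    | zero => rw [mul_zero, gstar_zero, zero_mul]
    | add b b' hb hb' => rw [mul_add, gstar_add, hb, hb', gstar_add, add_mul]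
    | single h s => simp only [single_mul_single, gstar_single, mul_inv_rev, mul_comm r s]

end Involution

section Hat

variable {G : Type*} [Group G] (x : G)

lemma of_mul_hatZ : of ℤ G x * hatZ x = hatZ x := by
  have h := mul_geom_sum (of ℤ G x) (orderOf x)
  rwa [← map_pow, pow_orderOf_eq_one, map_one, sub_self, sub_mul, one_mul, sub_eq_zero] at h

lemma hatZ_mul_of : hatZ x * of ℤ G x = hatZ x := by
  have h := geom_sum_mul (of ℤ G x) (orderOf x)
  rwa [← map_pow, pow_orderOf_eq_one, map_one, sub_self, mul_sub, mul_one, sub_eq_zero] at h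

lemma hatZ_mul_of_inv : hatZ x * of ℤ G x⁻¹ = hatZ x := by
  conv_lhs => rw [← hatZ_mul_of x, mul_assoc, ← map_mul, mul_inv_cancel, map_one, mul_one]

lemma of_pow_mul_hatZ (i : ℕ) : of ℤ G x ^ i * hatZ x = hatZ x := by
  induction i with
  | zero => rw [pow_zero, one_mul]
  | succ i ih => rw [pow_succ', mul_assoc, ih, of_mul_hatZ]

lemma hatZ_mul_hatZ : hatZ x * hatZ x = orderOf x • hatZ x := by
  conv_lhs => arg 1; rw [hatZ]
  rw [sum_mul, sum_congr rfl fun i _ => of_pow_mul_hatZ x i, sum_const, card_range]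

lemma coeff_hatZ (hx : IsOfFinOrder x) (g : G) :
    (hatZ x).coeff g = if g ∈ Subgroup.zpowers x then 1 else 0 := by
  classical
  have hinj : Set.InjOn (x ^ ·) (range (orderOf x)) := fun i hi j hj =>
    pow_injOn_Iio_orderOf (by simpa using hi) (by simpa using hj)
  calc (hatZ x).coeff g
        = ∑ i ∈ range (orderOf x), (single (x ^ i) 1 : MonoidAlgebra ℤ G).coeff g := by
          simp [hatZ]
    _ = ∑ h ∈ (range (orderOf x)).image (x ^ ·), (single h 1 : MonoidAlgebra ℤ G).coeff g :=
          (sum_image (f := fun h => (single h 1 : MonoidAlgebra ℤ G).coeff g) hinj).symm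
    _ = _ := by simp [Finsupp.single_apply, hx.mem_zpowers_iff_mem_range_orderOf]

lemma gstar_hatZ (hx : IsOfFinOrder x) : gstar (hatZ x) = hatZ x := by
  ext g; simp [coeff_gstar, coeff_hatZ x hx]

end Hat

lemma two_nsmul_mul_mul_eq_of_commute {R : Type*} [Ring R] {a b : R} (ha : a * a = 0)
    (hb : b * b = 0) (h : Commute ((1 + a) * (1 + b)) ((1 + b) * (1 + a))) :
    2 • (a * b * a) = 2 • (b * a * b) := by
  have expand : ∀ a b : R, a * a = 0 → b * b = 0 → (1 + a) * (1 + b) * ((1 + b) * (1 + a)) =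
      1 + 2 • (a + b + a * b + b * a) + 2 • (a * b * a) := by
    intro a b ha hb
    calc _ = 1 + 2 • (a + b + a * b + b * a) + 2 • (a * b * a) +
          (a * a + (1 + a) * (b * b) * (1 + a)) := by noncomm_ring
      _ = _ := by rw [ha, hb, mul_zero, zero_mul, add_zero, add_zero]
  have hsymm : b + a + b * a + a * b = a + b + a * b + b * a := by abel
  have := h.eq
  rwa [expand a b ha hb, expand b a hb ha, hsymm, add_right_inj] at this

lemma commute_mul_gstar_of_sq_eq_zero {K G : Type*} [CommRing K] [Group G]
    (H : Subgroup (MonoidAlgebra K G)ˣ)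
    (hH : ∀ u : (MonoidAlgebra K G)ˣ, u ∈ H ↔ gstar (u : MonoidAlgebra K G) = u)
    {a : MonoidAlgebra K G} (ha : a * a = 0) :
    Commute ((1 + a) * (1 + gstar a)) ((1 + gstar a) * (1 + a)) := by
  have hnil : ∀ b : MonoidAlgebra K G, b * b = 0 → IsUnit (1 + b) := fun b hb =>
    IsNilpotent.isUnit_one_add ⟨2, by rw [sq, hb]⟩
  obtain ⟨u, hu⟩ := hnil a ha
  obtain ⟨v, hv⟩ := hnil (gstar a) (by rw [← gstar_mul, ha, gstar_zero])
  have h₁ : gstar (1 + a) = 1 + gstar a := by rw [gstar_add, gstar_one]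
  have h₂ : gstar (1 + gstar a) = 1 + a := by rw [gstar_add, gstar_one, gstar_gstar]
  have huv : u * v ∈ H := by rw [hH, Units.val_mul, hu, hv, gstar_mul, h₁, h₂]
  have hvu : v * u ∈ H := by rw [hH, Units.val_mul, hu, hv, gstar_mul, h₁, h₂]
  have hsymm := (hH _).1 (H.mul_mem huv hvu)
  rw [Units.val_mul, Units.val_mul, Units.val_mul, hu, hv, gstar_mul, gstar_mul, gstar_mul, h₁,
    h₂] at hsymm
  exact hsymm.symm

section Bicyclic

variable {G : Type*} [Group G]

/-- `1 + bicyclicNil x y` is the bicyclic unit `1 + (1 - x) y x̂`. -/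
noncomputable def bicyclicNil (x y : G) : MonoidAlgebra ℤ G :=
  (1 - of ℤ G x) * of ℤ G y * hatZ x

noncomputable def hatSandwich (x z : G) : MonoidAlgebra ℤ G :=
  hatZ x * ((1 - of ℤ G z⁻¹) * (1 - of ℤ G z)) * hatZ x

lemma bicyclicNil_mul_self (x y : G) : bicyclicNil x y * bicyclicNil x y = 0 := by
  have h : hatZ x * (1 - of ℤ G x) = 0 := by rw [mul_sub, mul_one, hatZ_mul_of, sub_self]
  simp only [bicyclicNil, mul_assoc, ← mul_assoc (hatZ x), h, zero_mul, mul_zero]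

lemma hatZ_mul_hatSandwich (x z : G) :
    hatZ x * hatSandwich x z = orderOf x • hatSandwich x z := by
  rw [hatSandwich, ← mul_assoc, ← mul_assoc, hatZ_mul_hatZ, smul_mul_assoc, smul_mul_assoc]

lemma hatSandwich_mul_hatZ (x z : G) :
    hatSandwich x z * hatZ x = orderOf x • hatSandwich x z := by
  rw [hatSandwich, mul_assoc, hatZ_mul_hatZ, mul_smul_comm]

lemma hatSandwich_mul_of_inv (x z : G) : hatSandwich x z * of ℤ G x⁻¹ = hatSandwich x z := by
  rw [hatSandwich, mul_assoc _ (hatZ x), hatZ_mul_of_inv]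

variable {x y z : G}

lemma gstar_bicyclicNil (hx : IsOfFinOrder x) :
    gstar (bicyclicNil x y) = hatZ x * of ℤ G y⁻¹ * (1 - of ℤ G x⁻¹) := by
  rw [bicyclicNil, gstar_mul, gstar_mul, gstar_hatZ x hx, gstar_of, gstar_sub, gstar_one, gstar_of,
    mul_assoc]

lemma one_sub_of_mul_of (hz : y⁻¹ * x * y = z) :
    (1 - of ℤ G x) * of ℤ G y = of ℤ G y * (1 - of ℤ G z) := by
  rw [sub_mul, mul_sub, one_mul, mul_one, ← map_mul, ← map_mul, ← hz]
  group

lemma of_inv_mul_one_sub_of_inv (hz : y⁻¹ * x * y = z) :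
    of ℤ G y⁻¹ * (1 - of ℤ G x⁻¹) = (1 - of ℤ G z⁻¹) * of ℤ G y⁻¹ := by
  rw [sub_mul, mul_sub, one_mul, mul_one, ← map_mul, ← map_mul, ← hz]
  group

lemma gstar_bicyclicNil_mul_bicyclicNil (hx : IsOfFinOrder x) (hz : y⁻¹ * x * y = z) :
    gstar (bicyclicNil x y) * bicyclicNil x y = hatSandwich x z := by
  have hy : of ℤ G y⁻¹ * of ℤ G y = 1 := by rw [← map_mul, inv_mul_cancel, map_one]
  calc gstar (bicyclicNil x y) * bicyclicNil x y
      = hatZ x * (of ℤ G y⁻¹ * (1 - of ℤ G x⁻¹)) * ((1 - of ℤ G x) * of ℤ G y) * hatZ x := by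
        rw [gstar_bicyclicNil hx, bicyclicNil]; simp only [mul_assoc]
    _ = hatSandwich x z := by
        rw [of_inv_mul_one_sub_of_inv hz, one_sub_of_mul_of hz, hatSandwich]
        simp only [mul_assoc, ← mul_assoc (of ℤ G y⁻¹), hy, one_mul]

lemma of_mul_one_sub_of_mul_hatSandwich (H : Subgroup (MonoidAlgebra ℤ G)ˣ)
    (hH : ∀ u : (MonoidAlgebra ℤ G)ˣ, u ∈ H ↔ gstar (u : MonoidAlgebra ℤ G) = u)
    (hx : IsOfFinOrder x) (hz : y⁻¹ * x * y = z) :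
    of ℤ G y * ((1 - of ℤ G z) * hatSandwich x z) =
      hatSandwich x z * (1 - of ℤ G z⁻¹) * of ℤ G y⁻¹ := by
  set a := bicyclicNil x y with a_def
  have ha : a * a = 0 := bicyclicNil_mul_self x y
  have hb : gstar a * gstar a = 0 := by rw [← gstar_mul, ha, gstar_zero]
  have hba := gstar_bicyclicNil_mul_bicyclicNil hx hz
  have haba : a * gstar a * a = orderOf x • (of ℤ G y * ((1 - of ℤ G z) * hatSandwich x z)) :=
    calc a * gstar a * a = (1 - of ℤ G x) * of ℤ G y * (hatZ x * hatSandwich x z) := by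
          rw [mul_assoc, hba, a_def, bicyclicNil, mul_assoc _ (hatZ x)]
      _ = _ := by rw [hatZ_mul_hatSandwich, mul_smul_comm, one_sub_of_mul_of hz, mul_assoc]
  have hbab : gstar a * a * gstar a =
      orderOf x • (hatSandwich x z * (1 - of ℤ G z⁻¹) * of ℤ G y⁻¹) :=
    calc gstar a * a * gstar a
        = hatSandwich x z * hatZ x * (of ℤ G y⁻¹ * (1 - of ℤ G x⁻¹)) := by
          rw [hba, gstar_bicyclicNil hx]; simp only [mul_assoc]
      _ = _ := by
          rw [hatSandwich_mul_hatZ, smul_mul_assoc, of_inv_mul_one_sub_of_inv hz, ← mul_assoc]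
  have h2 := two_nsmul_mul_mul_eq_of_commute ha hb (commute_mul_gstar_of_sq_eq_zero H hH ha)
  rw [haba, hbab, smul_smul, smul_smul] at h2
  exact nsmul_right_injective (mul_ne_zero two_ne_zero hx.orderOf_pos.ne') h2

lemma of_mul_one_sub_of_mul_hatSandwich_eq (H : Subgroup (MonoidAlgebra ℤ G)ˣ)
    (hH : ∀ u : (MonoidAlgebra ℤ G)ˣ, u ∈ H ↔ gstar (u : MonoidAlgebra ℤ G) = u)
    (hx : IsOfFinOrder x) (hz : y⁻¹ * x * y = z) :
    of ℤ G z * ((1 - of ℤ G z) * hatSandwich x z) = (1 - of ℤ G z) * hatSandwich x z := by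
  have E₁ := of_mul_one_sub_of_mul_hatSandwich H hH hx hz
  have E₂ := of_mul_one_sub_of_mul_hatSandwich H hH hx (y := x * y) (z := z) (by rw [← hz]; group)
  obtain ⟨F, hF_def⟩ : ∃ F, (1 - of ℤ G z) * hatSandwich x z = F := ⟨_, rfl⟩
  rw [hF_def] at E₁ E₂ ⊢
  have hF : F * of ℤ G x⁻¹ = F := by
    rw [← hF_def, mul_assoc, hatSandwich_mul_of_inv]
  have hXYF : of ℤ G x * (of ℤ G y * F) = of ℤ G y * F :=
    calc of ℤ G x * (of ℤ G y * F) = of ℤ G (x * y) * F := by rw [map_mul, mul_assoc]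
      _ = of ℤ G y * F * of ℤ G x⁻¹ := by rw [E₂, mul_inv_rev, map_mul, ← mul_assoc, ← E₁]
      _ = of ℤ G y * F := by rw [mul_assoc, hF]
  calc of ℤ G z * F = of ℤ G y⁻¹ * (of ℤ G x * (of ℤ G y * F)) := by
        rw [← mul_assoc, ← mul_assoc, ← map_mul, ← map_mul, hz]
    _ = F := by rw [hXYF, ← mul_assoc, ← map_mul, inv_mul_cancel, map_one, one_mul]

end Bicyclic

section Coefficients

variable {G : Type*} [Group G]

lemma coeff_hatZ_mul (x : G) (a : MonoidAlgebra ℤ G) (g : G) :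
    (hatZ x * a).coeff g = ∑ i ∈ range (orderOf x), a.coeff ((x ^ i)⁻¹ * g) := by
  simp [hatZ, sum_mul, Finsupp.finsetSum_apply]

lemma coeff_one_sub_of_inv_mul_one_sub_of_mul (z : G) (a : MonoidAlgebra ℤ G) (g : G) :
    ((1 - of ℤ G z⁻¹) * (1 - of ℤ G z) * a).coeff g =
      2 * a.coeff g - a.coeff (z⁻¹ * g) - a.coeff (z * g) := by
  have hc : (1 - of ℤ G z⁻¹) * (1 - of ℤ G z) = 1 + 1 - of ℤ G z - of ℤ G z⁻¹ := by
    simp only [sub_mul, mul_sub, one_mul, mul_one, ← map_mul, inv_mul_cancel, map_one]; abel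
  rw [hc]
  simp [add_mul, sub_mul, two_mul]

lemma coeff_hatSandwich (x z g : G) : (hatSandwich x z).coeff g =
    ∑ i ∈ range (orderOf x), (2 * (hatZ x).coeff ((x ^ i)⁻¹ * g) -
      (hatZ x).coeff (z⁻¹ * ((x ^ i)⁻¹ * g)) - (hatZ x).coeff (z * ((x ^ i)⁻¹ * g))) := by
  simp only [hatSandwich, mul_assoc (hatZ x), coeff_hatZ_mul,
    coeff_one_sub_of_inv_mul_one_sub_of_mul]

variable {x z : G} (hx : IsOfFinOrder x)
include hx

lemma coeff_hatSandwich_one (hz : z ∉ Subgroup.zpowers x) :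
    (hatSandwich x z).coeff 1 = 2 * orderOf x := by
  have hz' : z⁻¹ ∉ Subgroup.zpowers x := by rwa [inv_mem_iff]
  have hterm : ∀ i ∈ range (orderOf x), 2 * (hatZ x).coeff ((x ^ i)⁻¹ * 1) -
      (hatZ x).coeff (z⁻¹ * ((x ^ i)⁻¹ * 1)) - (hatZ x).coeff (z * ((x ^ i)⁻¹ * 1)) = 2 := by
    intro i _
    have hi : (x ^ i)⁻¹ ∈ Subgroup.zpowers x := inv_mem (pow_mem (Subgroup.mem_zpowers x) i)
    simp [coeff_hatZ x hx, hi, Subgroup.mul_mem_cancel_right _ hi, hz, hz']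
  rw [coeff_hatSandwich, sum_congr rfl hterm, sum_const, card_range, nsmul_eq_mul, mul_comm]

lemma coeff_hatSandwich_nonpos {g : G} (hg : g ∉ Subgroup.zpowers x) :
    (hatSandwich x z).coeff g ≤ 0 := by
  rw [coeff_hatSandwich]
  refine sum_nonpos fun i _ => ?_
  have hi : (x ^ i)⁻¹ ∈ Subgroup.zpowers x := inv_mem (pow_mem (Subgroup.mem_zpowers x) i)
  simp only [coeff_hatZ x hx, Subgroup.mul_mem_cancel_left _ hi, hg, if_false]
  split_ifs <;> norm_num

lemma of_mul_one_sub_of_mul_hatSandwich_ne (hz : z ∉ Subgroup.zpowers x) :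
    of ℤ G z * ((1 - of ℤ G z) * hatSandwich x z) ≠ (1 - of ℤ G z) * hatSandwich x z := by
  intro h
  have hcoeff := congrArg (fun a => a.coeff z) h
  simp only [sub_mul, one_mul, of_apply, coeff_sub, Finsupp.sub_apply, coeff_single_mul_apply,
    inv_mul_cancel, one_mul, mul_one] at hcoeff
  have hn : (0 : ℤ) < orderOf x := by exact_mod_cast hx.orderOf_pos
  have hz' : z⁻¹ ∉ Subgroup.zpowers x := by rwa [inv_mem_iff]
  linarith [coeff_hatSandwich_one hx hz, coeff_hatSandwich_nonpos (z := z) hx hz,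
    coeff_hatSandwich_nonpos (z := z) hx hz']

end Coefficients

lemma Subgroup.zpowers_normal_of_conj_mem {G : Type*} [Group G] {x : G}
    (h : ∀ g : G, g * x * g⁻¹ ∈ Subgroup.zpowers x) : (Subgroup.zpowers x).Normal :=
  ⟨fun n hn g => by
    obtain ⟨k, rfl⟩ := Subgroup.mem_zpowers_iff.mp hn
    rw [← conj_zpow]
    exact zpow_mem (h g) k⟩

/-- If the symmetric units of ℤG form a subgroup, then every finite cyclic subgroup
of G is normal in G. -/
theorem stmt_11 {G : Type*} [Group G]
    (H : Subgroup (MonoidAlgebra ℤ G)ˣ)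
    (hH : ∀ u : (MonoidAlgebra ℤ G)ˣ, u ∈ H ↔ gstar (u : MonoidAlgebra ℤ G) = u) :
    ∀ x : G, IsOfFinOrder x → (Subgroup.zpowers x).Normal := by
  intro x hx
  refine Subgroup.zpowers_normal_of_conj_mem fun w => ?_
  by_contra hz
  exact of_mul_one_sub_of_mul_hatSandwich_ne hx hz
    (of_mul_one_sub_of_mul_hatSandwich_eq H hH hx (y := w⁻¹) (by group))
end
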